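/- Fix n ∈ ℕ. For orthogonal (n+1)×(n+1) real matrices R, S define the (2n+2)×(2n+2) block matrix K(R, S) := (1/2)·[[R+S, R−S], [R−S, R+S]]. Then: (i) K(R, S)ᵀ B K(R, S) = B; (ii) det K(R, S) = det R · det S, so K(R, S) has determinant 1 whenever det R = det S; (iii) K is a group homomorphism: K(R, S)·K(R', S') = K(R R', S S'); (iv) K(R, S) equals the block-diagonal matrix [[R, 0], [0, R]] if and only if R = S, so K restricted to the diagonal agrees with the embedding M ↦ [[M, 0], [0, (Mᵀ)⁻¹]] on O(n+1). -/

import Mathlib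

open Matrix

/-- The matrix `B = (1/2)·[[0, I], [I, 0]]` of the neutral bilinear form. -/
noncomputable def Bmat (n : ℕ) :
    Matrix (Fin (n + 1) ⊕ Fin (n + 1)) (Fin (n + 1) ⊕ Fin (n + 1)) ℝ :=
  (1 / 2 : ℝ) • Matrix.fromBlocks 0 1 1 0

/-- The block matrix `K(R, S) = (1/2)·[[R+S, R−S], [R−S, R+S]]`. -/
noncomputable def Kmat (n : ℕ) (R S : Matrix (Fin (n + 1)) (Fin (n + 1)) ℝ) :
    Matrix (Fin (n + 1) ⊕ Fin (n + 1)) (Fin (n + 1) ⊕ Fin (n + 1)) ℝ :=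
  (1 / 2 : ℝ) • Matrix.fromBlocks (R + S) (R - S) (R - S) (R + S)

/-!
Writing `R = A + C` and `S = A - C`, the matrix `K(R, S)` is the symmetric block matrix
`[[A, C], [C, A]]`. Block matrices of this shape multiply like pairs `(A + C, A - C)`
taken componentwise, and their determinant is `det (A + C) * det (A - C)`; this gives (ii)
and (iii). For (i), `[[A, C], [C, A]]ᵀ [[0, 1], [1, 0]] [[A, C], [C, A]]` has blocks
`AᵀC + CᵀA` and `AᵀA + CᵀC`, which are the half-difference and the half-sum of
`RᵀR` and `SᵀS`, i.e. `0` and `1`.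
-/

lemma exists_eq_add_and_eq_sub (K : Type*) {M : Type*} [Ring K] [Invertible (2 : K)]
    [AddCommGroup M] [Module K M] (x y : M) : ∃ a b : M, x = a + b ∧ y = a - b :=
  ⟨(⅟2 : K) • (x + y), (⅟2 : K) • (x - y), by match_scalars <;> simp [← two_mul],
    by match_scalars <;> simp⟩

namespace Matrix

variable {m α : Type*}

lemma fromBlocks_symm_mul_fromBlocks_symm [Fintype m] [NonUnitalNonAssocSemiring α]
    (A C A' C' : Matrix m m α) :
    fromBlocks A C C A * fromBlocks A' C' C' A' =
      fromBlocks (A * A' + C * C') (A * C' + C * A') (A * C' + C * A') (A * A' + C * C') := by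
  rw [fromBlocks_multiply, add_comm (C * A'), add_comm (C * C')]

lemma det_fromBlocks_symm [Fintype m] [DecidableEq m] [CommRing α] (A C : Matrix m m α) :
    (fromBlocks A C C A).det = (A + C).det * (A - C).det := by
  -- block row and column operations of determinant one make the matrix block triangular
  have h : fromBlocks 1 1 0 1 * fromBlocks A C C A * fromBlocks 1 (-1) 0 1 =
      fromBlocks (A + C) 0 C (A - C) := by
    simp only [fromBlocks_multiply]
    congr 1 <;> noncomm_ring
  simpa [det_fromBlocks_zero₂₁, det_fromBlocks_zero₁₂] using congrArg det h

lemma fromBlocks_symm_transpose_mul_swap_mul [Fintype m] [DecidableEq m] [NonAssocSemiring α]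
    (A C : Matrix m m α) :
    (fromBlocks A C C A)ᵀ * fromBlocks 0 1 1 0 * fromBlocks A C C A =
      fromBlocks (Aᵀ * C + Cᵀ * A) (Aᵀ * A + Cᵀ * C)
        (Aᵀ * A + Cᵀ * C) (Aᵀ * C + Cᵀ * A) := by
  simp only [fromBlocks_transpose, fromBlocks_multiply]
  congr 1 <;> simp [add_comm]

end Matrix

section Kmat

variable {n : ℕ}

lemma Kmat_add_sub (A C : Matrix (Fin (n + 1)) (Fin (n + 1)) ℝ) :
    Kmat n (A + C) (A - C) = fromBlocks A C C A := by
  rw [Kmat, fromBlocks_smul]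
  congr 1 <;> module

lemma Kmat_mul_Kmat (R S R' S' : Matrix (Fin (n + 1)) (Fin (n + 1)) ℝ) :
    Kmat n R S * Kmat n R' S' = Kmat n (R * R') (S * S') := by
  obtain ⟨A, C, rfl, rfl⟩ := exists_eq_add_and_eq_sub ℝ R S
  obtain ⟨A', C', rfl, rfl⟩ := exists_eq_add_and_eq_sub ℝ R' S'
  have hsum : (A + C) * (A' + C') = (A * A' + C * C') + (A * C' + C * A') := by noncomm_ring
  have hdiff : (A - C) * (A' - C') = (A * A' + C * C') - (A * C' + C * A') := by noncomm_ring
  rw [hsum, hdiff, Kmat_add_sub, Kmat_add_sub, Kmat_add_sub,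
    fromBlocks_symm_mul_fromBlocks_symm]

lemma det_Kmat (R S : Matrix (Fin (n + 1)) (Fin (n + 1)) ℝ) :
    (Kmat n R S).det = R.det * S.det := by
  obtain ⟨A, C, rfl, rfl⟩ := exists_eq_add_and_eq_sub ℝ R S
  rw [Kmat_add_sub, det_fromBlocks_symm]

lemma Kmat_transpose_mul_Bmat_mul_Kmat {R S : Matrix (Fin (n + 1)) (Fin (n + 1)) ℝ}
    (hR : Rᵀ * R = 1) (hS : Sᵀ * S = 1) : (Kmat n R S)ᵀ * Bmat n * Kmat n R S = Bmat n := by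
  obtain ⟨A, C, rfl, rfl⟩ := exists_eq_add_and_eq_sub ℝ R S
  have hcross :
      (2 : ℝ) • (Aᵀ * C + Cᵀ * A) = (A + C)ᵀ * (A + C) - (A - C)ᵀ * (A - C) := by
    rw [two_smul, transpose_add, transpose_sub]; noncomm_ring
  have hdiag :
      (2 : ℝ) • (Aᵀ * A + Cᵀ * C) = (A + C)ᵀ * (A + C) + (A - C)ᵀ * (A - C) := by
    rw [two_smul, transpose_add, transpose_sub]; noncomm_ring
  rw [hR, hS, sub_self, smul_eq_zero_iff_right two_ne_zero] at hcross
  rw [hR, hS, ← two_smul ℝ, smul_right_inj two_ne_zero] at hdiag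
  rw [Kmat_add_sub, Bmat, Matrix.mul_smul, Matrix.smul_mul, fromBlocks_symm_transpose_mul_swap_mul,
    hcross, hdiag]

lemma Kmat_self (R : Matrix (Fin (n + 1)) (Fin (n + 1)) ℝ) :
    Kmat n R R = fromBlocks R 0 0 R := by
  simpa using Kmat_add_sub R 0

lemma Kmat_eq_fromBlocks_iff {R S : Matrix (Fin (n + 1)) (Fin (n + 1)) ℝ} :
    Kmat n R S = fromBlocks R 0 0 R ↔ R = S := by
  refine ⟨fun h ↦ ?_, fun h ↦ h ▸ Kmat_self R⟩
  rw [Kmat, fromBlocks_smul, fromBlocks_inj] at h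
  simpa [sub_eq_zero] using h.2.1

end Kmat

/-- For orthogonal `R, S`: (i) `K(R,S)ᵀ B K(R,S) = B`;
(ii) `det K(R,S) = det R · det S`, so the determinant is `1` when `det R = det S`;
(iii) `K` is a group homomorphism; (iv) `K(R,S)` is block diagonal `[[R,0],[0,R]]` iff
`R = S`, and on the diagonal `K` agrees with `M ↦ [[M,0],[0,(Mᵀ)⁻¹]]` on `O(n+1)`. -/
theorem stmt_11 (n : ℕ) (R S : Matrix (Fin (n + 1)) (Fin (n + 1)) ℝ)
    (hR : Rᵀ * R = 1) (hS : Sᵀ * S = 1) :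
    -- (i)
    (Kmat n R S)ᵀ * Bmat n * Kmat n R S = Bmat n ∧
    -- (ii)
    (Kmat n R S).det = R.det * S.det ∧
    (R.det = S.det → (Kmat n R S).det = 1) ∧
    -- (iii)
    (∀ R' S' : Matrix (Fin (n + 1)) (Fin (n + 1)) ℝ, R'ᵀ * R' = 1 → S'ᵀ * S' = 1 →
      Kmat n R S * Kmat n R' S' = Kmat n (R * R') (S * S')) ∧
    -- (iv)
    ((Kmat n R S = Matrix.fromBlocks R 0 0 R) ↔ R = S) ∧
    Kmat n R R = Matrix.fromBlocks R 0 0 (Rᵀ)⁻¹ := by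
  refine ⟨Kmat_transpose_mul_Bmat_mul_Kmat hR hS, det_Kmat R S, fun h ↦ ?_,
    fun R' S' _ _ ↦ Kmat_mul_Kmat R S R' S', Kmat_eq_fromBlocks_iff, ?_⟩
  · rw [det_Kmat, h]
    simpa [det_transpose] using congrArg det hS
  · rw [Kmat_self, inv_eq_right_inv hR]
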